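/- arXiv:0905.2371 — 2 statements merged into one kernel-verified Lean document; each statement's English description precedes it below -/
import Mathlib

section
/- Let u be harmonic on A_r \ {z₀} (where z₀ ∈ A_r) such that u(z) − (1/2)log|z − z₀| extends harmonically to A_r. If two such functions u₁, u₂ have equal boundary values on both circles |z| = 1 and |z| = r, then u₁ = u₂ on A_r \ {z₀}. -/
open Complex

/-- A real-valued function on an open subset of `ℂ ≅ ℝ²` is harmonic if it is `C²`
and its Laplacian vanishes. -/
def HarmonicOn' (f : ℂ → ℝ) (s : Set ℂ) : Prop :=
  ContDiffOn ℝ 2 f s ∧ ∀ z ∈ s,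
    fderiv ℝ (fun w => fderiv ℝ f w 1) z 1 +
      fderiv ℝ (fun w => fderiv ℝ f w Complex.I) z Complex.I = 0

/-!
The logarithmic singularities cancel: off `z₀`, `u₁ - u₂ = v₁ - v₂` is harmonic on the whole
annulus, and its continuous extension vanishes on both boundary circles, so it suffices to have the
weak maximum principle. A harmonic function is locally the real part of a holomorphic `F`, so by the
maximum modulus principle for `exp ∘ F` it is locally constant near an interior local maximum.
Hence a frontier point of the compact set where the maximum over a compact `K ⊇ U` is attained
cannot lie in `U`.
-/

open Filter Topology Set Metric InnerProductSpace

theorem fderiv_fderiv_apply_eq_iteratedFDeriv {𝕜 E F : Type*} [NontriviallyNormedField 𝕜]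
    [NormedAddCommGroup E] [NormedSpace 𝕜 E] [NormedAddCommGroup F] [NormedSpace 𝕜 F]
    {f : E → F} {x : E} (hf : ContDiffAt 𝕜 2 f x) (v w : E) :
    fderiv 𝕜 (fun y => fderiv 𝕜 f y v) x w = iteratedFDeriv 𝕜 2 f x ![w, v] := by
  have hd : DifferentiableAt 𝕜 (fderiv 𝕜 f) x :=
    (hf.fderiv_right (m := 1) (by norm_num)).differentiableAt (by norm_num)
  rw [fderiv_clm_apply hd (differentiableAt_const v), iteratedFDeriv_two_apply]
  simp

theorem HarmonicOn'.harmonicOnNhd {f : ℂ → ℝ} {U : Set ℂ} (hU : IsOpen U)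
    (hf : HarmonicOn' f U) : HarmonicOnNhd f U := by
  intro z hz
  refine ⟨hf.1.contDiffAt (hU.mem_nhds hz), ?_⟩
  filter_upwards [hU.mem_nhds hz] with w hw
  have hw2 : ContDiffAt ℝ 2 f w := hf.1.contDiffAt (hU.mem_nhds hw)
  simp only [laplacian_eq_iteratedFDeriv_complexPlane, Pi.zero_apply]
  rw [← fderiv_fderiv_apply_eq_iteratedFDeriv hw2, ← fderiv_fderiv_apply_eq_iteratedFDeriv hw2]
  exact hf.2 w hw

theorem InnerProductSpace.HarmonicAt.eventually_eq_of_isLocalMax {f : ℂ → ℝ} {c : ℂ}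
    (hf : HarmonicAt f c) (hmax : IsLocalMax f c) : ∀ᶠ z in 𝓝 c, f z = f c := by
  obtain ⟨R, hR, hball⟩ := Metric.isOpen_iff.1 (isOpen_setOfPred_harmonicAt f) c hf
  obtain ⟨F, hFan, hFre⟩ := HarmonicOnNhd.exists_analyticOnNhd_ball_re_eq hball
  have hnorm : ∀ z ∈ ball c R, ‖Complex.exp (F z)‖ = Real.exp (f z) := fun z hz => by
    rw [Complex.norm_exp]
    exact congrArg Real.exp (hFre hz)
  have hc : c ∈ ball c R := mem_ball_self hR
  have hdiff : ∀ᶠ z in 𝓝 c, DifferentiableAt ℂ (Complex.exp ∘ F) z := by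
    filter_upwards [ball_mem_nhds c hR] with z hz
    exact (hFan z hz).differentiableAt.cexp
  have hmax' : IsLocalMax (norm ∘ Complex.exp ∘ F) c := by
    filter_upwards [hmax, ball_mem_nhds c hR] with z hz hzR
    simpa only [Function.comp_apply, hnorm z hzR, hnorm c hc] using Real.exp_le_exp.2 hz
  filter_upwards [Complex.norm_eventually_eq_of_isLocalMax hdiff hmax', ball_mem_nhds c hR]
    with z hz hzR
  simpa only [Function.comp_apply, hnorm z hzR, hnorm c hc, Real.exp_eq_exp] using hz

theorem InnerProductSpace.HarmonicOnNhd.le_of_forall_mem_diff_le {f : ℂ → ℝ} {U K : Set ℂ}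
    {C : ℝ} (hU : IsOpen U) (hK : IsCompact K) (hUK : U ⊆ K) (hf : HarmonicOnNhd f U)
    (hfK : ContinuousOn f K) (hC : ∀ z ∈ K \ U, f z ≤ C) : ∀ z ∈ U, f z ≤ C := by
  intro z hz
  obtain ⟨m, hmK, hm⟩ := hK.exists_isMaxOn ⟨z, hUK hz⟩ hfK
  set S := K ∩ f ⁻¹' {f m}
  have hS : IsClosed S := hfK.preimage_isClosed_of_isClosed hK.isClosed isClosed_singleton
  obtain ⟨w, hw⟩ := (nonempty_frontier_iff (s := S)).2
    ⟨⟨m, hmK, rfl⟩, (hK.of_isClosed_subset hS inter_subset_left).ne_univ⟩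
  have hwS : w ∈ S := hS.frontier_subset hw
  have hwU : w ∉ U := by
    intro hwU
    have hwmax : IsMaxOn f K w := fun y hy => (hm hy).trans_eq hwS.2.symm
    have hconst := (hf w hwU).eventually_eq_of_isLocalMax
      (hwmax.isLocalMax (mem_of_superset (hU.mem_nhds hwU) hUK))
    refine hw.2 (mem_interior_iff_mem_nhds.2 ?_)
    filter_upwards [hconst, hU.mem_nhds hwU] with y hy hyU
    exact ⟨hUK hyU, hy.trans hwS.2⟩
  calc f z ≤ f m := hm (hUK hz)
    _ = f w := hwS.2.symm
    _ ≤ C := hC w ⟨hwS.1, hwU⟩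

theorem InnerProductSpace.HarmonicOnNhd.eqOn_zero_of_forall_mem_diff {f : ℂ → ℝ}
    {U K : Set ℂ} (hU : IsOpen U) (hK : IsCompact K) (hUK : U ⊆ K) (hf : HarmonicOnNhd f U)
    (hfK : ContinuousOn f K) (h0 : ∀ z ∈ K \ U, f z = 0) : EqOn f 0 U := by
  intro z hz
  have hle := hf.le_of_forall_mem_diff_le (C := 0) hU hK hUK hfK (fun w hw => (h0 w hw).le) z hz
  have hge := hf.neg.le_of_forall_mem_diff_le (C := 0) hU hK hUK hfK.neg
    (fun w hw => by simp [h0 w hw]) z hz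
  simp only [Pi.neg_apply, neg_nonpos] at hge
  exact le_antisymm hle hge

section Gluing

variable {X Y : Type*} [DecidableEq X] {g h : X → Y} {U K : Set X} {a : X}

theorem eqOn_update_of_eqOn_diff_singleton (hgh : EqOn g h (U \ {a})) :
    EqOn (Function.update g a (h a)) h U := by
  intro z hz
  rcases eq_or_ne z a with rfl | hne
  · exact Function.update_self ..
  · rw [Function.update_of_ne hne]
    exact hgh ⟨hz, hne⟩

theorem continuousOn_update_of_eqOn_diff_singleton [TopologicalSpace X] [T1Space X]
    [TopologicalSpace Y] (hU : IsOpen U) (ha : a ∈ U)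
    (hg : ContinuousOn g (K \ {a})) (hh : ContinuousOn h U) (hgh : EqOn g h (U \ {a})) :
    ContinuousOn (Function.update g a (h a)) K := by
  refine continuousOn_of_locally_continuousOn fun z _ => ?_
  rcases eq_or_ne z a with rfl | hne
  · exact ⟨U, hU, ha, (hh.congr (eqOn_update_of_eqOn_diff_singleton hgh)).mono
      inter_subset_right⟩
  · refine ⟨{a}ᶜ, isOpen_compl_singleton, hne, hg.congr fun w hw => ?_⟩
    exact Function.update_of_ne hw.2 _ _

end Gluing

theorem isOpen_annulus (r R : ℝ) : IsOpen {z : ℂ | r < ‖z‖ ∧ ‖z‖ < R} :=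
  (isOpen_lt continuous_const continuous_norm).inter (isOpen_lt continuous_norm continuous_const)

theorem isCompact_closedAnnulus (r R : ℝ) : IsCompact {z : ℂ | r ≤ ‖z‖ ∧ ‖z‖ ≤ R} :=
  (isCompact_closedBall (0 : ℂ) R).of_isClosed_subset
    ((isClosed_le continuous_const continuous_norm).inter
      (isClosed_le continuous_norm continuous_const))
    (fun _ hz => mem_closedBall_zero_iff.2 hz.2)

theorem norm_eq_or_norm_eq_of_mem_closedAnnulus_diff {r R : ℝ} {z : ℂ}
    (hz : z ∈ {z : ℂ | r ≤ ‖z‖ ∧ ‖z‖ ≤ R} \ {z : ℂ | r < ‖z‖ ∧ ‖z‖ < R}) :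
    ‖z‖ = R ∨ ‖z‖ = r := by
  by_contra! h
  exact hz.2 ⟨hz.1.1.lt_of_ne h.2.symm, hz.1.2.lt_of_ne h.1⟩

theorem dirichlet_uniqueness_log_singularity_general (r : ℝ)
    (z₀ : ℂ) (hz₀ : z₀ ∈ {z : ℂ | r < ‖z‖ ∧ ‖z‖ < 1})
    (u₁ u₂ : ℂ → ℝ)
    (v₁ v₂ : ℂ → ℝ)
    (hv₁ : HarmonicOn' v₁ {z : ℂ | r < ‖z‖ ∧ ‖z‖ < 1})
    (hv₂ : HarmonicOn' v₂ {z : ℂ | r < ‖z‖ ∧ ‖z‖ < 1})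
    (hu₁ : ∀ z ∈ {z : ℂ | r < ‖z‖ ∧ ‖z‖ < 1} \ {z₀},
      u₁ z = v₁ z + (1 / 2) * Real.log (‖z - z₀‖))
    (hu₂ : ∀ z ∈ {z : ℂ | r < ‖z‖ ∧ ‖z‖ < 1} \ {z₀},
      u₂ z = v₂ z + (1 / 2) * Real.log (‖z - z₀‖))
    (ub₁ ub₂ : ℂ → ℝ)
    (hc₁ : ContinuousOn ub₁ ({z : ℂ | r ≤ ‖z‖ ∧ ‖z‖ ≤ 1} \ {z₀}))
    (hc₂ : ContinuousOn ub₂ ({z : ℂ | r ≤ ‖z‖ ∧ ‖z‖ ≤ 1} \ {z₀}))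
    (he₁ : ∀ z ∈ {z : ℂ | r < ‖z‖ ∧ ‖z‖ < 1} \ {z₀}, ub₁ z = u₁ z)
    (he₂ : ∀ z ∈ {z : ℂ | r < ‖z‖ ∧ ‖z‖ < 1} \ {z₀}, ub₂ z = u₂ z)
    (hbd : ∀ z : ℂ, ‖z‖ = 1 ∨ ‖z‖ = r → ub₁ z = ub₂ z) :
    ∀ z ∈ {z : ℂ | r < ‖z‖ ∧ ‖z‖ < 1} \ {z₀}, u₁ z = u₂ z := by
  set A := {z : ℂ | r < ‖z‖ ∧ ‖z‖ < 1}
  set K := {z : ℂ | r ≤ ‖z‖ ∧ ‖z‖ ≤ 1}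
  have hA : IsOpen A := isOpen_annulus r 1
  have hAK : A ⊆ K := fun z hz => ⟨hz.1.le, hz.2.le⟩
  have hsub : EqOn (ub₁ - ub₂) (v₁ - v₂) (A \ {z₀}) := by
    intro z hz
    simp only [Pi.sub_apply]
    rw [he₁ z hz, he₂ z hz, hu₁ z hz, hu₂ z hz]
    ring
  set H := Function.update (ub₁ - ub₂) z₀ ((v₁ - v₂) z₀)
  have hHA : EqOn H (v₁ - v₂) A := eqOn_update_of_eqOn_diff_singleton hsub
  have hHharm : HarmonicOnNhd H A := fun z hz =>
    (harmonicAt_congr_nhds (eventually_of_mem (hA.mem_nhds hz) hHA)).2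
      (((hv₁.harmonicOnNhd hA).sub (hv₂.harmonicOnNhd hA)) z hz)
  have hHcont : ContinuousOn H K := continuousOn_update_of_eqOn_diff_singleton hA hz₀
    (hc₁.sub hc₂) (hv₁.1.continuousOn.sub hv₂.1.continuousOn) hsub
  have hH0 : ∀ z ∈ K \ A, H z = 0 := fun z hz => by
    simp only [H, Function.update_of_ne (ne_of_mem_of_not_mem hz₀ hz.2).symm, Pi.sub_apply,
      hbd z (norm_eq_or_norm_eq_of_mem_closedAnnulus_diff hz), sub_self]
  intro z hz
  have hv : v₁ z - v₂ z = 0 := (hHA hz.1).symm.trans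
    (hHharm.eqOn_zero_of_forall_mem_diff hA (isCompact_closedAnnulus r 1) hAK hHcont hH0 hz.1)
  rw [hu₁ z hz, hu₂ z hz, sub_eq_zero.1 hv]

/-- Uniqueness of the Dirichlet problem on the annulus for harmonic functions with a
logarithmic singularity `(1/2) log|z - z₀|` at `z₀`: if two such functions have the same
boundary values on both circles, they coincide. -/
theorem dirichlet_uniqueness_log_singularity (r : ℝ) (hr : 0 < r) (hr1 : r < 1)
    (z₀ : ℂ) (hz₀ : z₀ ∈ {z : ℂ | r < ‖z‖ ∧ ‖z‖ < 1})
    (u₁ u₂ : ℂ → ℝ)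
    (h₁ : HarmonicOn' u₁ ({z : ℂ | r < ‖z‖ ∧ ‖z‖ < 1} \ {z₀}))
    (h₂ : HarmonicOn' u₂ ({z : ℂ | r < ‖z‖ ∧ ‖z‖ < 1} \ {z₀}))
    (v₁ v₂ : ℂ → ℝ)
    (hv₁ : HarmonicOn' v₁ {z : ℂ | r < ‖z‖ ∧ ‖z‖ < 1})
    (hv₂ : HarmonicOn' v₂ {z : ℂ | r < ‖z‖ ∧ ‖z‖ < 1})
    (hu₁ : ∀ z ∈ {z : ℂ | r < ‖z‖ ∧ ‖z‖ < 1} \ {z₀},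
      u₁ z = v₁ z + (1 / 2) * Real.log (‖z - z₀‖))
    (hu₂ : ∀ z ∈ {z : ℂ | r < ‖z‖ ∧ ‖z‖ < 1} \ {z₀},
      u₂ z = v₂ z + (1 / 2) * Real.log (‖z - z₀‖))
    (ub₁ ub₂ : ℂ → ℝ)
    (hc₁ : ContinuousOn ub₁ ({z : ℂ | r ≤ ‖z‖ ∧ ‖z‖ ≤ 1} \ {z₀}))
    (hc₂ : ContinuousOn ub₂ ({z : ℂ | r ≤ ‖z‖ ∧ ‖z‖ ≤ 1} \ {z₀}))
    (he₁ : ∀ z ∈ {z : ℂ | r < ‖z‖ ∧ ‖z‖ < 1} \ {z₀}, ub₁ z = u₁ z)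
    (he₂ : ∀ z ∈ {z : ℂ | r < ‖z‖ ∧ ‖z‖ < 1} \ {z₀}, ub₂ z = u₂ z)
    (hbd : ∀ z : ℂ, ‖z‖ = 1 ∨ ‖z‖ = r → ub₁ z = ub₂ z) :
    ∀ z ∈ {z : ℂ | r < ‖z‖ ∧ ‖z‖ < 1} \ {z₀}, u₁ z = u₂ z :=
  dirichlet_uniqueness_log_singularity_general r z₀ hz₀ u₁ u₂ v₁ v₂ hv₁ hv₂ hu₁ hu₂ ub₁ ub₂ hc₁ hc₂
    he₁ he₂ hbd
end

section
/- For r ∈ (0,1) and s ∈ (−1, 0), there exists m ∈ (−3, −2) satisfying m = 2h(r^{−2(m+2)}) − 1 − s, where h(z) = z ϑ₁'(z)/ϑ₁(z) is the logarithmic derivative of the annular Jacobi theta function. -/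
open Complex

/-- The constant `C = ∏_{k=1}^∞ (1 - r^{2k})`. -/
noncomputable def thetaC (r : ℝ) : ℂ :=
  ∏' k : ℕ, (1 - (r : ℂ) ^ (2 * (k + 1)))

/-- The annular Jacobi theta function
`ϑ₁(z) = C (1 - 1/z) ∏_{k=1}^∞ (1 - r^{2k} z)(1 - r^{2k}/z)`. -/
noncomputable def theta1 (r : ℝ) (z : ℂ) : ℂ :=
  thetaC r * (1 - 1 / z) *
    ∏' k : ℕ, ((1 - (r : ℂ) ^ (2 * (k + 1)) * z) * (1 - (r : ℂ) ^ (2 * (k + 1)) / z))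

/-- The logarithmic derivative `h(z) = z ϑ₁'(z)/ϑ₁(z)`. -/
noncomputable def thetaH (r : ℝ) (z : ℂ) : ℂ :=
  z * deriv (theta1 r) z / theta1 r z

/-!
Write `ϑ₁(z) = C (1 - 1/z) E(z) E(1/z)` with `E(z) = ∏ (1 - r^{2(k+1)} z)`, an entire
function with no zeros in `‖z‖ < r⁻²`. With `H = z E'/E` this gives
`h(z) = 1/(z - 1) + H(z) - H(1/z)`, and the functional equation `E(z) = (1 - r² z) E(r² z)`
turns it into `h(z) = r²/(z - r²) + 1/(z - 1) + H(z) - H(r²/z)`. So on `(r², 1)` the function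
`h` is real and continuous, and tends to `+∞` at `r²` and to `-∞` at `1`. As `m` runs over
`(-3, -2)`, `r^{-2(m+2)}` runs over `(r², 1)`, so `2h(r^{-2(m+2)})` crosses the line `m + 1 + s`.
-/

open Filter Set Topology

noncomputable def canonicalProd (q : ℕ → ℂ) (z : ℂ) : ℂ :=
  ∏' k, (1 - q k * z)

noncomputable def canonicalProdH (q : ℕ → ℂ) (z : ℂ) : ℂ :=
  z * logDeriv (canonicalProd q) z

section canonicalProd

variable {q : ℕ → ℂ}

lemma multipliable_one_sub_mul (hq : Summable (‖q ·‖)) (z : ℂ) :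
    Multipliable fun k ↦ 1 - q k * z := by
  simpa [sub_eq_add_neg] using Complex.multipliable_one_add_of_summable
    (f := fun k ↦ -(q k * z)) (.of_norm (by simpa [norm_mul] using hq.mul_right ‖z‖))

lemma hasProdLocallyUniformlyOn_canonicalProd (hq : Summable (‖q ·‖)) (R : ℝ) :
    HasProdLocallyUniformlyOn (fun k z ↦ 1 - q k * z) (canonicalProd q) (Metric.ball 0 R) := by
  simp_rw [sub_eq_add_neg]
  refine (hq.mul_right R).hasProdLocallyUniformlyOn_nat_one_add Metric.isOpen_ball
    (.of_forall fun k z hz ↦ ?_) fun _ ↦ by fun_prop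
  rw [norm_neg, norm_mul]
  exact mul_le_mul_of_nonneg_left (mem_ball_zero_iff.mp hz).le (norm_nonneg _)

lemma differentiable_canonicalProd (hq : Summable (‖q ·‖)) :
    Differentiable ℂ (canonicalProd q) := fun z ↦
  ((hasProdLocallyUniformlyOn_canonicalProd hq (‖z‖ + 1)).differentiableOn
    (.of_forall fun _ ↦ by simpa [Finset.prod_fn] using
      DifferentiableOn.finsetProd (fun _ _ ↦ by fun_prop)) Metric.isOpen_ball).differentiableAt
    (Metric.isOpen_ball.mem_nhds (by simp))

lemma canonicalProd_ne_zero (hq : Summable (‖q ·‖)) {z : ℂ} (hz : ∀ k, 1 - q k * z ≠ 0) :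
    canonicalProd q z ≠ 0 := by
  simpa [canonicalProd, sub_eq_add_neg] using tprod_one_add_ne_zero_of_summable
    (f := fun k ↦ -(q k * z)) (by simpa [sub_eq_add_neg] using hz)
    (by simpa [norm_mul] using hq.mul_right ‖z‖)

lemma canonicalProd_ne_zero_of_norm_le (hq : Summable (‖q ·‖)) {b : ℝ}
    (hb : ∀ k, ‖q k‖ ≤ b) {z : ℂ} (hz : b * ‖z‖ < 1) : canonicalProd q z ≠ 0 := by
  refine canonicalProd_ne_zero hq fun k h ↦ ?_
  have hlt : ‖q k * z‖ < 1 := by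
    rw [norm_mul]; exact (mul_le_mul_of_nonneg_right (hb k) (norm_nonneg z)).trans_lt hz
  rw [← sub_eq_zero.mp h, norm_one] at hlt
  exact lt_irrefl _ hlt

lemma canonicalProd_eq_mul_succ (hq : Summable (‖q ·‖)) (z : ℂ) :
    canonicalProd q z = (1 - q 0 * z) * canonicalProd (fun k ↦ q (k + 1)) z := by
  simp only [canonicalProd]
  exact tprod_eq_zero_mul' (multipliable_one_sub_mul ((summable_nat_add_iff 1).mpr hq) z)

lemma continuousAt_canonicalProdH (hq : Summable (‖q ·‖)) {z : ℂ}
    (hz : canonicalProd q z ≠ 0) : ContinuousAt (canonicalProdH q) z := by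
  have hE := differentiable_canonicalProd hq
  unfold canonicalProdH
  simp only [logDeriv_apply]
  exact continuousAt_id.mul (((hE.analyticAt z).deriv.continuousAt).div
    hE.continuous.continuousAt hz)

end canonicalProd

lemma im_tprod_eq_zero {ι : Type*} {f : ι → ℂ} (hf : ∀ i, (f i).im = 0) :
    (∏' i, f i).im = 0 := by
  have hclosed : IsClosed (Complex.ofRealHom.range : Set ℂ) := by
    rw [RingHom.coe_range]
    exact Complex.isometry_ofReal.isClosedEmbedding.isClosed_range
  obtain ⟨x, hx⟩ := tprod_mem (f := f) hclosed fun i ↦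
    RingHom.mem_range.mpr ⟨(f i).re, Complex.ext (by simp) (by simp [hf i])⟩
  rw [← hx]
  simp

lemma im_deriv_ofReal_eq_zero {f : ℂ → ℂ} (hf : ∀ t : ℝ, (f t).im = 0) (x : ℝ) :
    (deriv f x).im = 0 := by
  by_cases hd : DifferentiableAt ℂ f x
  · -- `(-I * w).re = w.im`
    have h : HasDerivAt (fun t : ℝ ↦ (f t).im) (deriv f x).im x := by
      simpa using (hd.hasDerivAt.const_mul (-Complex.I)).real_of_complex
    simp only [hf] at h
    exact h.unique (hasDerivAt_const _ _)
  · simp [deriv_zero_of_not_differentiableAt hd]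

lemma tendsto_div_sub_add_nhdsGT {g : ℝ → ℝ} {a c : ℝ} (hc : 0 < c)
    (hg : ContinuousAt g a) :
    Tendsto (fun x ↦ c / (x - a) + g x) (𝓝[>] a) atTop := by
  have hsub : Tendsto (fun x ↦ x - a) (𝓝[>] a) (𝓝[>] 0) := by
    refine tendsto_nhdsWithin_iff.mpr
      ⟨?_, eventually_nhdsWithin_of_forall fun x hx ↦ mem_Ioi.mpr (sub_pos.mpr hx)⟩
    simpa using ((continuous_sub_right a).tendsto a).mono_left nhdsWithin_le_nhds
  simpa [div_eq_mul_inv] using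
    ((tendsto_inv_nhdsGT_zero.comp hsub).const_mul_atTop hc).atTop_add
      (hg.tendsto.mono_left nhdsWithin_le_nhds)

lemma tendsto_div_sub_add_nhdsLT {g : ℝ → ℝ} {a c : ℝ} (hc : 0 < c)
    (hg : ContinuousAt g a) :
    Tendsto (fun x ↦ c / (x - a) + g x) (𝓝[<] a) atBot := by
  have hsub : Tendsto (fun x ↦ x - a) (𝓝[<] a) (𝓝[<] 0) := by
    refine tendsto_nhdsWithin_iff.mpr
      ⟨?_, eventually_nhdsWithin_of_forall fun x hx ↦ mem_Iio.mpr (sub_neg.mpr hx)⟩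
    simpa using ((continuous_sub_right a).tendsto a).mono_left nhdsWithin_le_nhds
  simpa [div_eq_mul_inv] using
    ((tendsto_inv_nhdsLT_zero.comp hsub).const_mul_atBot hc).atBot_add
      (hg.tendsto.mono_left nhdsWithin_le_nhds)

lemma exists_mem_Ioo_eq_of_tendsto {f g : ℝ → ℝ} {a b : ℝ} (hab : a < b)
    (hf : ContinuousOn f (Ioo a b)) (hfa : Tendsto f (𝓝[>] a) atTop)
    (hfb : Tendsto f (𝓝[<] b) atBot) (hg : Continuous g) : ∃ c ∈ Ioo a b, f c = g c := by
  have hga : Tendsto (fun x ↦ -g x) (𝓝[>] a) (𝓝 (-g a)) :=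
    (hg.tendsto a).neg.mono_left nhdsWithin_le_nhds
  have hgb : Tendsto (fun x ↦ -g x) (𝓝[<] b) (𝓝 (-g b)) :=
    (hg.tendsto b).neg.mono_left nhdsWithin_le_nhds
  obtain ⟨c, hc, hfg⟩ := isPreconnected_Ioo.intermediate_value_Iii (f := fun x ↦ f x - g x)
    (le_principal_iff.mpr (Ioo_mem_nhdsLT hab)) (le_principal_iff.mpr (Ioo_mem_nhdsGT hab))
    (hf.sub hg.continuousOn) (by simpa only [sub_eq_add_neg] using hfb.atBot_add hgb)
    (by simpa only [sub_eq_add_neg] using hfa.atTop_add hga) (mem_univ 0)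
  exact ⟨c, hc, sub_eq_zero.mp hfg⟩

def thetaSeq (r : ℝ) (k : ℕ) : ℂ := (r : ℂ) ^ (2 * (k + 1))

section theta

variable {r : ℝ}

lemma norm_thetaSeq (r : ℝ) (k : ℕ) : ‖thetaSeq r k‖ = (r ^ 2) ^ (k + 1) := by
  rw [thetaSeq, norm_pow, Complex.norm_real, Real.norm_eq_abs, pow_mul, sq_abs]

lemma summable_norm_thetaSeq (hr : |r| < 1) : Summable (‖thetaSeq r ·‖) := by
  simp_rw [norm_thetaSeq]
  exact (summable_nat_add_iff 1).mpr
    (summable_geometric_of_lt_one (sq_nonneg r) ((sq_lt_one_iff_abs_lt_one r).mpr hr))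

lemma canonicalProd_thetaSeq_ne_zero (hr : |r| < 1) {z : ℂ} (hz : r ^ 2 * ‖z‖ < 1) :
    canonicalProd (thetaSeq r) z ≠ 0 := by
  refine canonicalProd_ne_zero_of_norm_le (summable_norm_thetaSeq hr) (fun k ↦ ?_) hz
  rw [norm_thetaSeq]
  exact pow_le_of_le_one (sq_nonneg r) ((sq_lt_one_iff_abs_lt_one r).mpr hr).le k.succ_ne_zero

lemma canonicalProd_thetaSeq_eq (hr : |r| < 1) (z : ℂ) :
    canonicalProd (thetaSeq r) z = (1 - r ^ 2 * z) * canonicalProd (thetaSeq r) (r ^ 2 * z) := by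
  rw [canonicalProd_eq_mul_succ (summable_norm_thetaSeq hr)]
  congr 1
  simp only [canonicalProd, thetaSeq]
  congr! 3 with k
  ring

lemma theta1_eq (hr : |r| < 1) : theta1 r = fun z ↦ canonicalProd (thetaSeq r) 1 *
    ((1 - z⁻¹) * (canonicalProd (thetaSeq r) z * canonicalProd (thetaSeq r) z⁻¹)) := by
  have hq := summable_norm_thetaSeq hr
  funext z
  rw [canonicalProd, canonicalProd, canonicalProd,
    ← (multipliable_one_sub_mul hq z).tprod_mul (multipliable_one_sub_mul hq z⁻¹)]
  simp [theta1, thetaC, thetaSeq, div_eq_mul_inv, mul_assoc]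

lemma im_theta1_ofReal (r x : ℝ) : (theta1 r x).im = 0 := by
  have hC : (thetaC r).im = 0 := im_tprod_eq_zero fun k ↦ by simp [← Complex.ofReal_pow]
  have hP : (∏' k : ℕ, ((1 - (r : ℂ) ^ (2 * (k + 1)) * x) *
      (1 - (r : ℂ) ^ (2 * (k + 1)) / x))).im = 0 :=
    im_tprod_eq_zero fun k ↦ by
      simp [← Complex.ofReal_pow, ← Complex.ofReal_mul, ← Complex.ofReal_div]
  simp [theta1, Complex.mul_im, hC, hP]

lemma im_thetaH_ofReal (r x : ℝ) : (thetaH r x).im = 0 := by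
  have hθ := im_theta1_ofReal r x
  have hD := im_deriv_ofReal_eq_zero (im_theta1_ofReal r) x
  simp [thetaH, Complex.div_im, Complex.mul_im, Complex.mul_re, hθ, hD]

lemma thetaH_eq (hr : |r| < 1) {z : ℂ} (hz0 : z ≠ 0) (hz1 : z ≠ 1)
    (hE : canonicalProd (thetaSeq r) z ≠ 0) (hE' : canonicalProd (thetaSeq r) z⁻¹ ≠ 0) :
    thetaH r z =
      1 / (z - 1) + (canonicalProdH (thetaSeq r) z - canonicalProdH (thetaSeq r) z⁻¹) := by
  simp only [canonicalProdH]
  set E := canonicalProd (thetaSeq r)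
  have hD : Differentiable ℂ E := differentiable_canonicalProd (summable_norm_thetaSeq hr)
  have hC : E 1 ≠ 0 :=
    canonicalProd_thetaSeq_ne_zero hr (by simpa using (sq_lt_one_iff_abs_lt_one r).mpr hr)
  have hfac : 1 - z⁻¹ ≠ 0 := by rwa [sub_ne_zero, ne_comm, inv_ne_one]
  have hinv : DifferentiableAt ℂ (·⁻¹) z := differentiableAt_inv hz0
  have hEinv : DifferentiableAt ℂ (fun w ↦ E w⁻¹) z := (hD _).comp z hinv
  have hlog_inv : logDeriv (fun w ↦ E w⁻¹) z = logDeriv E z⁻¹ * -(z ^ 2)⁻¹ := by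
    rw [show (fun w ↦ E w⁻¹) = E ∘ (·⁻¹) from rfl, logDeriv_comp (hD _) hinv]
    simp
  have hlog_fac : logDeriv (fun w ↦ 1 - w⁻¹) z = (z ^ 2)⁻¹ / (1 - z⁻¹) := by
    simp [logDeriv_apply]
  have hθ : theta1 r = fun w ↦ E 1 * ((1 - w⁻¹) * (E w * E w⁻¹)) := theta1_eq hr
  rw [thetaH, ← mul_div_assoc', ← logDeriv_apply, hθ, logDeriv_const_mul z _ hC,
    logDeriv_mul (f := fun w ↦ 1 - w⁻¹) (g := fun w ↦ E w * E w⁻¹) z hfac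
      (mul_ne_zero hE hE') (by fun_prop) ((hD z).mul hEinv),
    logDeriv_mul (f := E) (g := fun w ↦ E w⁻¹) z hE hE' (hD z) hEinv, hlog_inv, hlog_fac]
  have hz1' : z - 1 ≠ 0 := sub_ne_zero.mpr hz1
  field_simp
  ring

lemma canonicalProdH_thetaSeq_eq (hr : |r| < 1) {w : ℂ} (h0 : 1 - r ^ 2 * w ≠ 0)
    (h : canonicalProd (thetaSeq r) (r ^ 2 * w) ≠ 0) :
    canonicalProdH (thetaSeq r) w =
      -(r ^ 2 * w) / (1 - r ^ 2 * w) + canonicalProdH (thetaSeq r) (r ^ 2 * w) := by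
  simp only [canonicalProdH]
  set E := canonicalProd (thetaSeq r)
  have hD : Differentiable ℂ E := differentiable_canonicalProd (summable_norm_thetaSeq hr)
  have hE : E = fun w ↦ (1 - r ^ 2 * w) * E (r ^ 2 * w) := funext (canonicalProd_thetaSeq_eq hr)
  have hscale : DifferentiableAt ℂ (fun w ↦ (r : ℂ) ^ 2 * w) w := by fun_prop
  have hlog : logDeriv (fun w ↦ E (r ^ 2 * w)) w = logDeriv E (r ^ 2 * w) * r ^ 2 := by
    rw [show (fun w ↦ E (r ^ 2 * w)) = E ∘ (fun w ↦ (r : ℂ) ^ 2 * w) from rfl,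
      logDeriv_comp (hD _) hscale]
    simp
  conv_lhs => rw [hE]
  rw [logDeriv_mul (f := fun w : ℂ ↦ 1 - r ^ 2 * w) (g := fun w ↦ E (r ^ 2 * w)) w h0 h
    (by fun_prop) ((hD _).comp w hscale), hlog, logDeriv_apply]
  have hd : deriv (fun w : ℂ ↦ 1 - r ^ 2 * w) w = -(r : ℂ) ^ 2 := by simp
  rw [hd]
  ring

lemma thetaH_eq_sq_div_sub_add (hr : |r| < 1) {z : ℂ} (hz0 : z ≠ 0) (hz1 : z ≠ 1)
    (hzr : z ≠ r ^ 2) (hE : canonicalProd (thetaSeq r) z ≠ 0)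
    (hE' : canonicalProd (thetaSeq r) (r ^ 2 * z⁻¹) ≠ 0) :
    thetaH r z = r ^ 2 / (z - r ^ 2) + (1 / (z - 1) +
      (canonicalProdH (thetaSeq r) z - canonicalProdH (thetaSeq r) (r ^ 2 * z⁻¹))) := by
  have hzr' : z - r ^ 2 ≠ 0 := sub_ne_zero.mpr hzr
  have h0 : 1 - r ^ 2 * z⁻¹ ≠ 0 := by
    rw [sub_ne_zero, ne_comm, ← div_eq_mul_inv, ne_eq, div_eq_one_iff_eq hz0]
    exact hzr.symm
  have hEinv : canonicalProd (thetaSeq r) z⁻¹ ≠ 0 := by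
    rw [canonicalProd_thetaSeq_eq hr]
    exact mul_ne_zero h0 hE'
  rw [thetaH_eq hr hz0 hz1 hE hEinv, canonicalProdH_thetaSeq_eq hr h0 hE']
  field_simp
  ring

lemma continuousAt_re_canonicalProdH_thetaSeq (hr : |r| < 1) {t : ℝ} (ht : r ^ 2 * |t| < 1) :
    ContinuousAt (fun s : ℝ ↦ (canonicalProdH (thetaSeq r) s).re) t :=
  Complex.continuous_re.continuousAt.comp <|
    (continuousAt_canonicalProdH (summable_norm_thetaSeq hr) (canonicalProd_thetaSeq_ne_zero hr
      (by rwa [Complex.norm_real, Real.norm_eq_abs]))).comp Complex.continuous_ofReal.continuousAt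

lemma re_thetaH_eq (hr0 : 0 < r) (hr1 : r < 1) {x : ℝ} (hx : x ∈ Ioo (r ^ 2) 1) :
    (thetaH r x).re = 1 / (x - 1) + ((canonicalProdH (thetaSeq r) x).re -
      (canonicalProdH (thetaSeq r) (x⁻¹ : ℝ)).re) := by
  have hr : |r| < 1 := abs_lt.mpr ⟨by linarith, hr1⟩
  have hx0 : 0 < x := (pow_pos hr0 2).trans hx.1
  have hnorm : ‖(x : ℂ)‖ = x := Complex.norm_of_nonneg hx0.le
  rw [thetaH_eq hr (by exact_mod_cast hx0.ne') (by exact_mod_cast hx.2.ne)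
    (canonicalProd_thetaSeq_ne_zero hr (by rw [hnorm]; nlinarith [hx.2]))
    (canonicalProd_thetaSeq_ne_zero hr (by
      rw [norm_inv, hnorm, ← div_eq_mul_inv, div_lt_one hx0]; exact hx.1)),
    Complex.add_re, show (1 : ℂ) / (x - 1) = ((1 / (x - 1) : ℝ) : ℂ) by push_cast; rfl,
    Complex.ofReal_re, Complex.sub_re, Complex.ofReal_inv]

lemma re_thetaH_eq_sq_div_sub_add (hr0 : 0 < r) (hr1 : r < 1) {x : ℝ} (hx : x ∈ Ioo (r ^ 2) 1) :
    (thetaH r x).re = r ^ 2 / (x - r ^ 2) + (1 / (x - 1) + ((canonicalProdH (thetaSeq r) x).re -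
      (canonicalProdH (thetaSeq r) (r ^ 2 * x⁻¹ : ℝ)).re)) := by
  have hr : |r| < 1 := abs_lt.mpr ⟨by linarith, hr1⟩
  have hx0 : 0 < x := (pow_pos hr0 2).trans hx.1
  have hnorm : ‖(x : ℂ)‖ = x := Complex.norm_of_nonneg hx0.le
  have hr2 : r ^ 2 < 1 := pow_lt_one₀ hr0.le hr1 two_ne_zero
  rw [thetaH_eq_sq_div_sub_add hr (by exact_mod_cast hx0.ne') (by exact_mod_cast hx.2.ne)
    (by exact_mod_cast hx.1.ne')
    (canonicalProd_thetaSeq_ne_zero hr (by rw [hnorm]; nlinarith [hx.2]))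
    (canonicalProd_thetaSeq_ne_zero hr (by
      rw [norm_mul, norm_inv, hnorm, norm_pow, Complex.norm_real, Real.norm_eq_abs, sq_abs,
        ← mul_assoc, ← div_eq_mul_inv, div_lt_one hx0]
      exact (mul_lt_of_lt_one_left (pow_pos hr0 2) hr2).trans hx.1)),
    Complex.add_re, Complex.add_re, Complex.sub_re,
    show (r : ℂ) ^ 2 / (x - r ^ 2) = ((r ^ 2 / (x - r ^ 2) : ℝ) : ℂ) by push_cast; rfl,
    show (1 : ℂ) / (x - 1) = ((1 / (x - 1) : ℝ) : ℂ) by push_cast; rfl,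
    Complex.ofReal_re, Complex.ofReal_re]
  push_cast
  rfl

lemma continuousOn_re_thetaH (hr0 : 0 < r) (hr1 : r < 1) :
    ContinuousOn (fun x : ℝ ↦ (thetaH r x).re) (Ioo (r ^ 2) 1) := by
  have hr : |r| < 1 := abs_lt.mpr ⟨by linarith, hr1⟩
  refine ContinuousOn.congr (fun x hx ↦ ContinuousAt.continuousWithinAt ?_)
    fun x hx ↦ re_thetaH_eq hr0 hr1 hx
  have hx0 : 0 < x := (pow_pos hr0 2).trans hx.1
  have hρ := continuousAt_re_canonicalProdH_thetaSeq hr (t := x) (by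
    rw [abs_of_pos hx0]; nlinarith [hx.2])
  have hρinv := (continuousAt_re_canonicalProdH_thetaSeq hr (t := x⁻¹) (by
    rw [abs_of_pos (inv_pos.mpr hx0), ← div_eq_mul_inv, div_lt_one hx0]; exact hx.1)).comp
    (continuousAt_inv₀ hx0.ne')
  exact (continuousAt_const.div (continuousAt_id.sub continuousAt_const)
    (sub_ne_zero.mpr hx.2.ne)).add (hρ.sub hρinv)

lemma tendsto_re_thetaH_nhdsLT_one (hr0 : 0 < r) (hr1 : r < 1) :
    Tendsto (fun x : ℝ ↦ (thetaH r x).re) (𝓝[<] 1) atBot := by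
  have hr : |r| < 1 := abs_lt.mpr ⟨by linarith, hr1⟩
  have hr2 : r ^ 2 < 1 := by nlinarith
  have hρ := continuousAt_re_canonicalProdH_thetaSeq hr (t := 1) (by simpa using hr2)
  have hρinv := hρ.comp_of_eq (continuousAt_inv₀ one_ne_zero) inv_one
  refine (tendsto_div_sub_add_nhdsLT one_pos (hρ.sub hρinv)).congr' ?_
  filter_upwards [Ioo_mem_nhdsLT hr2] with x hx
  exact (re_thetaH_eq hr0 hr1 hx).symm

lemma tendsto_re_thetaH_nhdsGT_sq (hr0 : 0 < r) (hr1 : r < 1) :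
    Tendsto (fun x : ℝ ↦ (thetaH r x).re) (𝓝[>] (r ^ 2)) atTop := by
  have hr : |r| < 1 := abs_lt.mpr ⟨by linarith, hr1⟩
  have hr2 : r ^ 2 < 1 := by nlinarith
  have hr2pos : 0 < r ^ 2 := by positivity
  have hρ := continuousAt_re_canonicalProdH_thetaSeq hr (t := r ^ 2) (by
    rw [abs_of_pos hr2pos]; nlinarith)
  have hρ1 := (continuousAt_re_canonicalProdH_thetaSeq hr (t := 1) (by simpa using hr2)).comp_of_eq
    (f := fun x : ℝ ↦ r ^ 2 * x⁻¹) (x := r ^ 2) (by fun_prop (disch := positivity))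
    (by field_simp)
  have hreg : ContinuousAt (fun x : ℝ ↦ 1 / (x - 1) + ((canonicalProdH (thetaSeq r) x).re -
      (canonicalProdH (thetaSeq r) (r ^ 2 * x⁻¹ : ℝ)).re)) (r ^ 2) :=
    (continuousAt_const.div (continuousAt_id.sub continuousAt_const)
      (sub_ne_zero.mpr hr2.ne)).add (hρ.sub hρ1)
  refine (tendsto_div_sub_add_nhdsGT hr2pos hreg).congr' ?_
  filter_upwards [Ioo_mem_nhdsGT hr2] with x hx
  exact (re_thetaH_eq_sq_div_sub_add hr0 hr1 hx).symm

lemma mapsTo_rpow_neg_two_mul_Ioi (hr0 : 0 < r) (hr1 : r < 1) :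
    MapsTo (fun m : ℝ ↦ r ^ (-2 * (m + 2))) (Ioi (-3)) (Ioi (r ^ 2)) := fun m hm ↦ by
  rw [mem_Ioi, ← Real.rpow_two]
  exact Real.rpow_lt_rpow_of_exponent_gt hr0 hr1 (by linarith [mem_Ioi.mp hm])

lemma mapsTo_rpow_neg_two_mul_Iio (hr0 : 0 < r) (hr1 : r < 1) :
    MapsTo (fun m : ℝ ↦ r ^ (-2 * (m + 2))) (Iio (-2)) (Iio 1) := fun m hm ↦
  Real.rpow_lt_one hr0.le hr1 (by linarith [mem_Iio.mp hm])

lemma mapsTo_rpow_neg_two_mul_Ioo (hr0 : 0 < r) (hr1 : r < 1) :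
    MapsTo (fun m : ℝ ↦ r ^ (-2 * (m + 2))) (Ioo (-3) (-2)) (Ioo (r ^ 2) 1) := fun _ hm ↦
  ⟨mapsTo_rpow_neg_two_mul_Ioi hr0 hr1 hm.1, mapsTo_rpow_neg_two_mul_Iio hr0 hr1 hm.2⟩

lemma continuous_rpow_neg_two_mul (hr0 : 0 < r) : Continuous fun m : ℝ ↦ r ^ (-2 * (m + 2)) :=
  continuous_const.rpow (by fun_prop) fun _ ↦ Or.inl hr0.ne'

lemma tendsto_rpow_neg_two_mul_nhdsGT (hr0 : 0 < r) (hr1 : r < 1) :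
    Tendsto (fun m : ℝ ↦ r ^ (-2 * (m + 2))) (𝓝[>] (-3)) (𝓝[>] (r ^ 2)) := by
  have h := ((continuous_rpow_neg_two_mul hr0).continuousWithinAt (x := -3)).tendsto_nhdsWithin
    (mapsTo_rpow_neg_two_mul_Ioi hr0 hr1)
  rwa [show -2 * ((-3 : ℝ) + 2) = 2 by norm_num, Real.rpow_two] at h

lemma tendsto_rpow_neg_two_mul_nhdsLT (hr0 : 0 < r) (hr1 : r < 1) :
    Tendsto (fun m : ℝ ↦ r ^ (-2 * (m + 2))) (𝓝[<] (-2)) (𝓝[<] 1) := by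
  have h := ((continuous_rpow_neg_two_mul hr0).continuousWithinAt (x := -2)).tendsto_nhdsWithin
    (mapsTo_rpow_neg_two_mul_Iio hr0 hr1)
  rwa [show -2 * ((-2 : ℝ) + 2) = 0 by norm_num, Real.rpow_zero] at h

end theta

theorem exists_m_fixed_point_general (r : ℝ) (hr : 0 < r) (hr1 : r < 1)
    (s : ℝ) :
    ∃ m ∈ Set.Ioo (-3 : ℝ) (-2),
      (m : ℂ) = 2 * thetaH r ((r ^ (-2 * (m + 2)) : ℝ) : ℂ) - 1 - (s : ℂ) := by
  set x : ℝ → ℝ := fun m ↦ r ^ (-2 * (m + 2))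
  obtain ⟨m, hm, hfix⟩ := exists_mem_Ioo_eq_of_tendsto (by norm_num)
    (f := fun m ↦ 2 * (thetaH r (x m)).re) (g := (· + (1 + s)))
    (continuousOn_const.mul ((continuousOn_re_thetaH hr hr1).comp
      (continuous_rpow_neg_two_mul hr).continuousOn (mapsTo_rpow_neg_two_mul_Ioo hr hr1)))
    (((tendsto_re_thetaH_nhdsGT_sq hr hr1).comp
      (tendsto_rpow_neg_two_mul_nhdsGT hr hr1)).const_mul_atTop two_pos)
    (((tendsto_re_thetaH_nhdsLT_one hr hr1).comp
      (tendsto_rpow_neg_two_mul_nhdsLT hr hr1)).const_mul_atBot two_pos)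
    (continuous_add_const (1 + s))
  refine ⟨m, hm, ?_⟩
  rw [← Complex.re_add_im (thetaH r (x m)), im_thetaH_ofReal, Complex.ofReal_zero, zero_mul,
    add_zero]
  exact_mod_cast (by linarith : m = 2 * (thetaH r (x m)).re - 1 - s)

/-- For `s ∈ (-1,0)` there exists `m ∈ (-3,-2)` with `m = 2h(r^{-2(m+2)}) - 1 - s`. -/
theorem exists_m_fixed_point (r : ℝ) (hr : 0 < r) (hr1 : r < 1)
    (s : ℝ) (hs : s ∈ Set.Ioo (-1 : ℝ) 0) :
    ∃ m ∈ Set.Ioo (-3 : ℝ) (-2),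
      (m : ℂ) = 2 * thetaH r ((r ^ (-2 * (m + 2)) : ℝ) : ℂ) - 1 - (s : ℂ) :=
  exists_m_fixed_point_general r hr hr1 s
end
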